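/- arXiv:1711.02511 — 2 statements merged into one kernel-verified Lean document; each statement's English description precedes it below -/
import Mathlib

section
/- Let λ₁, λ₂ be nonnegative integers with λ₁ ≥ 1, and set t₁ = λ₁(3λ₁+λ₂+3)/((λ₁+1)(3λ₁+λ₂+4)) and t₂ = (3λ₁+λ₂+3)/(3λ₁+λ₂+4). Then t₁, t₂ are distinct, both different from 0 and 1, and they satisfy the two equations: −3λ₁/t₁ − 3/(t₁−t₂) = 0, and −λ₂/t₂ − 1/(t₂−1) − 3/(t₂−t₁) = 0. -/
/-! With `A = 3λ₁ + λ₂ + 3`, the two roots are pinned down by the linear relations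
`(λ₁ + 1) t₁ = λ₁ t₂` and `(A + 1) t₂ = A`. The first says `t₂ - t₁ = t₁ / λ₁`, which is
exactly the first Bethe equation; feeding `3 / (t₂ - t₁) = 3 (λ₁ + 1) / t₂` into the second
reduces it to `A / t₂ = -1 / (t₂ - 1)`, i.e. to the second relation. -/

namespace G2Gaudin

section Field

variable {K : Type*} [Field K] {a b t₁ t₂ : K}

theorem bethe_eq_color_one (h₁ : (a + 1) * t₁ = a * t₂) (ht₁ : t₁ ≠ 0) (hne : t₁ ≠ t₂) :
    -(3 * a) / t₁ - 3 / (t₁ - t₂) = 0 := by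
  have hsub : t₁ - t₂ ≠ 0 := sub_ne_zero.mpr hne
  field_simp
  linear_combination -3 * h₁

theorem bethe_eq_color_two (h₁ : (a + 1) * t₁ = a * t₂)
    (h₂ : (3 * a + b + 4) * t₂ = 3 * a + b + 3) (ht₂ : t₂ ≠ 0) (ht₂' : t₂ ≠ 1)
    (hne : t₁ ≠ t₂) :
    -b / t₂ - 1 / (t₂ - 1) - 3 / (t₂ - t₁) = 0 := by
  have ha : a + 1 ≠ 0 := by
    rintro ha
    exact ht₂ (by linear_combination h₁ + (t₂ - t₁) * ha)
  have hsub : t₂ - t₁ ≠ 0 := sub_ne_zero.mpr hne.symm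
  have hsub' : t₂ - 1 ≠ 0 := sub_ne_zero.mpr ht₂'
  field_simp
  refine mul_left_cancel₀ ha ?_
  linear_combination ((t₂ - 1) * (b + 1) + 1) * h₁ - t₂ * h₂

end Field

section Ordered

variable {K : Type*} [Field K] [LinearOrder K] [IsStrictOrderedRing K] {a b t₁ t₂ : K}

theorem root_relations (ha : 0 ≤ a) (hb : 0 ≤ b)
    (ht₁ : t₁ = a * (3 * a + b + 3) / ((a + 1) * (3 * a + b + 4)))
    (ht₂ : t₂ = (3 * a + b + 3) / (3 * a + b + 4)) :
    (a + 1) * t₁ = a * t₂ ∧ (3 * a + b + 4) * t₂ = 3 * a + b + 3 := by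
  have hA : 3 * a + b + 4 ≠ 0 := by positivity
  have ha₁ : a + 1 ≠ 0 := by positivity
  subst ht₁ ht₂
  constructor <;> field_simp

theorem roots_strictly_ordered (ha : 0 < a) (hb : 0 ≤ b) (h₁ : (a + 1) * t₁ = a * t₂)
    (h₂ : (3 * a + b + 4) * t₂ = 3 * a + b + 3) :
    0 < t₁ ∧ t₁ < t₂ ∧ t₂ < 1 := by
  have ht₂ : 0 < t₂ := by nlinarith
  have ht₂' : t₂ < 1 := by nlinarith
  have ht₁ : 0 < t₁ := by nlinarith
  exact ⟨ht₁, by nlinarith, ht₂'⟩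

end Ordered

end G2Gaudin

open G2Gaudin in
/-- For `λ₁ ≥ 1`, the pair `t₁ = λ₁(3λ₁+λ₂+3)/((λ₁+1)(3λ₁+λ₂+4))`,
`t₂ = (3λ₁+λ₂+3)/(3λ₁+λ₂+4)` consists of distinct numbers, different from 0
and 1, satisfying the Bethe ansatz equations for the G₂ Gaudin model with
data `Λ = (λ, ω₂)`, `z = (0,1)`, `l = (1,1)`. -/
theorem g2_bae_l11 (l1 l2 : ℕ) (h1 : 1 ≤ l1) :
    ∀ t₁ t₂ : ℚ,
      t₁ = (l1 : ℚ) * (3 * l1 + l2 + 3) / ((l1 + 1) * (3 * l1 + l2 + 4)) →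
      t₂ = ((3 : ℚ) * l1 + l2 + 3) / (3 * l1 + l2 + 4) →
      t₁ ≠ t₂ ∧ t₁ ≠ 0 ∧ t₁ ≠ 1 ∧ t₂ ≠ 0 ∧ t₂ ≠ 1 ∧
        -(3 * (l1 : ℚ)) / t₁ - 3 / (t₁ - t₂) = 0 ∧
        -(l2 : ℚ) / t₂ - 1 / (t₂ - 1) - 3 / (t₂ - t₁) = 0 := by
  intro t₁ t₂ ht₁ ht₂
  have hl1 : (0 : ℚ) < l1 := by exact_mod_cast h1
  obtain ⟨hrel₁, hrel₂⟩ := root_relations hl1.le (Nat.cast_nonneg l2) ht₁ ht₂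
  obtain ⟨ht₁_pos, ht₁₂, ht₂_lt⟩ := roots_strictly_ordered hl1 (Nat.cast_nonneg l2) hrel₁ hrel₂
  have hne : t₁ ≠ t₂ := ht₁₂.ne
  refine ⟨hne, ht₁_pos.ne', (ht₁₂.trans ht₂_lt).ne, (ht₁_pos.trans ht₁₂).ne', ht₂_lt.ne,
    bethe_eq_color_one hrel₁ ht₁_pos.ne' hne,
    bethe_eq_color_two hrel₁ hrel₂ (ht₁_pos.trans ht₁₂).ne' ht₂_lt.ne hne⟩
end

section
/- Let λ₁, λ₂ be nonnegative integers with λ₂ ≥ 1. Let t₁ = (3λ₁+λ₂+3)(3λ₁+2λ₂+4)/((3λ₁+λ₂+5)(3λ₁+2λ₂+6)), and let t₂, t₃ be the two roots of the quadratic x² − [2(3λ₁+2λ₂+4)(3λ₁+5λ₂+3λ₁λ₂+λ₂²+6)/((λ₂+2)(3λ₁+λ₂+5)(3λ₁+2λ₂+6))]·x + λ₂(3λ₁+λ₂+3)(3λ₁+2λ₂+4)²/((λ₂+2)(3λ₁+λ₂+5)(3λ₁+2λ₂+6)²). Then (t₁; t₂, t₃) satisfies the Bethe ansatz equations: −3λ₁/t₁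 − 3/(t₁−t₂) − 3/(t₁−t₃) = 0; −λ₂/t₂ − 1/(t₂−1) − 3/(t₂−t₁) + 2/(t₂−t₃) = 0; and −λ₂/t₃ − 1/(t₃−1) − 3/(t₃−t₁) + 2/(t₃−t₂) = 0. -/
/-!
Write `y(x) = x² - B x + C = (x - t₂)(x - t₃)`. Since `1/(t - t₂) + 1/(t - t₃) = y'(t)/y(t)`, the first
equation says `λ₁ y(t₁) + t₁ y'(t₁) = 0`. Since `2/(t₂ - t₃) = y''(t₂)/y'(t₂)`, the other two say that
the cubic `W = x(x-1)(x-t₁) y'' - (λ₂(x-1)(x-t₁) + x(x-t₁) + 3x(x-1)) y'` vanishes at the roots of `y`,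
which holds because `W` is divisible by `y`, with quotient `-(2λ₂+6) x + 2(3λ₁+5λ₂+3λ₁λ₂+λ₂²+6)/(3λ₁+λ₂+5)`.
Both facts are identities in `λ₁, λ₂, x` once `t₁, B, C` are substituted.
-/

/-- The first Bethe root `t₁` for the data `Λ = ((λ₁,λ₂), ω₂)`, `z = (0,1)`, `l = (1,2)`. -/
noncomputable def g2t1 (l1 l2 : ℕ) : ℂ :=
  ((3 * l1 + l2 + 3) * (3 * l1 + 2 * l2 + 4) : ℂ) /
    ((3 * l1 + l2 + 5) * (3 * l1 + 2 * l2 + 6))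

/-- The coefficient of `x` in the quadratic whose roots are `t₂, t₃`. -/
noncomputable def g2B (l1 l2 : ℕ) : ℂ :=
  (2 * (3 * l1 + 2 * l2 + 4) * (3 * l1 + 5 * l2 + 3 * l1 * l2 + l2 ^ 2 + 6) : ℂ) /
    ((l2 + 2) * (3 * l1 + l2 + 5) * (3 * l1 + 2 * l2 + 6))

/-- The constant term of the quadratic whose roots are `t₂, t₃`. -/
noncomputable def g2C (l1 l2 : ℕ) : ℂ :=
  ((l2 : ℂ) * (3 * l1 + l2 + 3) * (3 * l1 + 2 * l2 + 4) ^ 2) /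
    ((l2 + 2) * (3 * l1 + l2 + 5) * (3 * l1 + 2 * l2 + 6) ^ 2)

section BetheEquations

variable {K : Type*} [Field K] {B C u v : K}

theorem add_eq_of_quadratic_roots (hu : u ^ 2 - B * u + C = 0) (hv : v ^ 2 - B * v + C = 0)
    (huv : u ≠ v) : u + v = B := by
  have h : (u - v) * (u + v - B) = 0 := by linear_combination hu - hv
  exact eq_of_sub_eq_zero ((mul_eq_zero.mp h).resolve_left (sub_ne_zero.mpr huv))

theorem mul_eq_of_quadratic_roots (hu : u ^ 2 - B * u + C = 0) (hv : v ^ 2 - B * v + C = 0)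
    (huv : u ≠ v) : u * v = C := by
  linear_combination u * add_eq_of_quadratic_roots hu hv huv - hu

theorem bethe_eq_of_log_deriv {a t : K} (hB : u + v = B) (hC : u * v = C)
    (ht : t ≠ 0) (htu : t ≠ u) (htv : t ≠ v)
    (h : a * (t ^ 2 - B * t + C) + t * (2 * t - B) = 0) :
    -(3 * a) / t - 3 / (t - u) - 3 / (t - v) = 0 := by
  have hu : t - u ≠ 0 := sub_ne_zero.mpr htu
  have hv : t - v ≠ 0 := sub_ne_zero.mpr htv
  subst hB hC
  field_simp
  linear_combination (-3) * h

theorem bethe_eq_of_fuchsian {a t α β : K} (hu : u ^ 2 - B * u + C = 0)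
    (hv : v ^ 2 - B * v + C = 0) (huv : u ≠ v) (hu0 : u ≠ 0) (hu1 : u ≠ 1) (hut : u ≠ t)
    (hW : ∀ z, 2 * (z * (z - 1) * (z - t))
      - (a * ((z - 1) * (z - t)) + z * (z - t) + 3 * (z * (z - 1))) * (2 * z - B)
      = (α * z + β) * (z ^ 2 - B * z + C)) :
    -a / u - 1 / (u - 1) - 3 / (u - t) + 2 / (u - v) = 0 := by
  have hB := add_eq_of_quadratic_roots hu hv huv
  have h1 : u - 1 ≠ 0 := sub_ne_zero.mpr hu1
  have ht : u - t ≠ 0 := sub_ne_zero.mpr hut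
  have huv' : u - v ≠ 0 := sub_ne_zero.mpr huv
  have hWu := hW u
  rw [hu, mul_zero] at hWu
  subst hB
  field_simp
  linear_combination hWu

end BetheEquations

section G2

variable (l1 l2 : ℕ)

theorem g2_denominators_ne_zero :
    (3 * l1 + l2 + 5 : ℂ) ≠ 0 ∧ (3 * l1 + 2 * l2 + 6 : ℂ) ≠ 0 ∧ (l2 + 2 : ℂ) ≠ 0 :=
  ⟨by exact_mod_cast (by omega : 3 * l1 + l2 + 5 ≠ 0),
    by exact_mod_cast (by omega : 3 * l1 + 2 * l2 + 6 ≠ 0),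
    by exact_mod_cast (by omega : l2 + 2 ≠ 0)⟩

theorem g2t1_ne_zero : g2t1 l1 l2 ≠ 0 := by
  obtain ⟨h1, h2, -⟩ := g2_denominators_ne_zero l1 l2
  have h3 : (3 * l1 + l2 + 3 : ℂ) ≠ 0 := by exact_mod_cast (by omega : 3 * l1 + l2 + 3 ≠ 0)
  have h4 : (3 * l1 + 2 * l2 + 4 : ℂ) ≠ 0 := by
    exact_mod_cast (by omega : 3 * l1 + 2 * l2 + 4 ≠ 0)
  exact div_ne_zero (mul_ne_zero h3 h4) (mul_ne_zero h1 h2)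

theorem g2_log_deriv_identity :
    (l1 : ℂ) * (g2t1 l1 l2 ^ 2 - g2B l1 l2 * g2t1 l1 l2 + g2C l1 l2)
      + g2t1 l1 l2 * (2 * g2t1 l1 l2 - g2B l1 l2) = 0 := by
  obtain ⟨h1, h2, h3⟩ := g2_denominators_ne_zero l1 l2
  unfold g2t1 g2B g2C
  field_simp
  ring

theorem g2_fuchsian_identity (z : ℂ) :
    2 * (z * (z - 1) * (z - g2t1 l1 l2))
      - ((l2 : ℂ) * ((z - 1) * (z - g2t1 l1 l2)) + z * (z - g2t1 l1 l2) + 3 * (z * (z - 1)))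
        * (2 * z - g2B l1 l2)
      = (-(2 * l2 + 6) * z + 2 * (3 * l1 + 5 * l2 + 3 * l1 * l2 + l2 ^ 2 + 6) / (3 * l1 + l2 + 5))
        * (z ^ 2 - g2B l1 l2 * z + g2C l1 l2) := by
  obtain ⟨h1, h2, h3⟩ := g2_denominators_ne_zero l1 l2
  unfold g2t1 g2B g2C
  field_simp
  ring

end G2

theorem g2_bae_l12_general (l1 l2 : ℕ) (t₂ t₃ : ℂ)
    (h2 : t₂ ^ 2 - g2B l1 l2 * t₂ + g2C l1 l2 = 0)
    (h3 : t₃ ^ 2 - g2B l1 l2 * t₃ + g2C l1 l2 = 0)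
    (hne : t₂ ≠ t₃)
    (h20 : t₂ ≠ 0) (h21 : t₂ ≠ 1) (h2t : t₂ ≠ g2t1 l1 l2)
    (h30 : t₃ ≠ 0) (h31 : t₃ ≠ 1) (h3t : t₃ ≠ g2t1 l1 l2) :
    -(3 * (l1 : ℂ)) / g2t1 l1 l2 - 3 / (g2t1 l1 l2 - t₂) - 3 / (g2t1 l1 l2 - t₃) = 0 ∧
    -(l2 : ℂ) / t₂ - 1 / (t₂ - 1) - 3 / (t₂ - g2t1 l1 l2) + 2 / (t₂ - t₃) = 0 ∧
    -(l2 : ℂ) / t₃ - 1 / (t₃ - 1) - 3 / (t₃ - g2t1 l1 l2) + 2 / (t₃ - t₂) = 0 :=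
  ⟨bethe_eq_of_log_deriv (add_eq_of_quadratic_roots h2 h3 hne)
      (mul_eq_of_quadratic_roots h2 h3 hne) (g2t1_ne_zero l1 l2) h2t.symm h3t.symm
      (g2_log_deriv_identity l1 l2),
    bethe_eq_of_fuchsian h2 h3 hne h20 h21 h2t (g2_fuchsian_identity l1 l2),
    bethe_eq_of_fuchsian h3 h2 hne.symm h30 h31 h3t (g2_fuchsian_identity l1 l2)⟩

/-- For `λ₂ ≥ 1`, if `t₂, t₃` are the two roots of the quadratic
`x² − B x + C` (with `B, C` as above), then `(t₁; t₂, t₃)` satisfies the Bethe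
ansatz equations for the G₂ Gaudin model with `Λ = ((λ₁,λ₂), ω₂)`, `z = (0,1)`,
`l = (1,2)`. -/
theorem g2_bae_l12 (l1 l2 : ℕ) (h : 1 ≤ l2) (t₂ t₃ : ℂ)
    (h2 : t₂ ^ 2 - g2B l1 l2 * t₂ + g2C l1 l2 = 0)
    (h3 : t₃ ^ 2 - g2B l1 l2 * t₃ + g2C l1 l2 = 0)
    (hne : t₂ ≠ t₃)
    (h20 : t₂ ≠ 0) (h21 : t₂ ≠ 1) (h2t : t₂ ≠ g2t1 l1 l2)
    (h30 : t₃ ≠ 0) (h31 : t₃ ≠ 1) (h3t : t₃ ≠ g2t1 l1 l2) :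
    -(3 * (l1 : ℂ)) / g2t1 l1 l2 - 3 / (g2t1 l1 l2 - t₂) - 3 / (g2t1 l1 l2 - t₃) = 0 ∧
    -(l2 : ℂ) / t₂ - 1 / (t₂ - 1) - 3 / (t₂ - g2t1 l1 l2) + 2 / (t₂ - t₃) = 0 ∧
    -(l2 : ℂ) / t₃ - 1 / (t₃ - 1) - 3 / (t₃ - g2t1 l1 l2) + 2 / (t₃ - t₂) = 0 :=
  g2_bae_l12_general l1 l2 t₂ t₃ h2 h3 hne h20 h21 h2t h30 h31 h3t
end
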